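/- arXiv:2109.07862 — 2 statements merged into one kernel-verified Lean document; each statement's English description precedes it below -/
import Mathlib

section
/- For ν ∈ (0,1), λ > 0 and x > 0, the two expressions x · sup_{η<0} { η/x − log(λ/(λ + (−η)^ν)) } and sup_{θ>0} { θx − (λ(e^θ − 1))^{1/ν} } are equal. -/
/-!
The substitution `η = -(λ (e^θ - 1))^(1/ν)` maps `θ > 0` bijectively onto `η < 0` and inverts
`θ = -log (λ / (λ + (-η)^ν))`. Under it `x (η / x - log (λ / (λ + (-η)^ν))) = θ x - (λ (e^θ - 1))^(1/ν)`,
so the two suprema are taken over the same set of values once the first is scaled by `x > 0`.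
-/

open Real Set

lemma image_mul_exp_sub_one_Ioi {c : ℝ} (hc : 0 < c) :
    (fun θ => c * (exp θ - 1)) '' Ioi 0 = Ioi 0 := by
  ext t
  simp only [mem_image, mem_Ioi]
  constructor
  · rintro ⟨θ, hθ, rfl⟩
    exact mul_pos hc (sub_pos.2 (one_lt_exp_iff.2 hθ))
  · intro ht
    have hpos : 0 < 1 + t / c := by positivity
    refine ⟨log (1 + t / c), log_pos (by simp; positivity), ?_⟩
    rw [exp_log hpos]
    field_simp
    ring

lemma image_rpow_Ioi {r : ℝ} (hr : r ≠ 0) : (fun t : ℝ => t ^ r) '' Ioi 0 = Ioi 0 := by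
  ext s
  simp only [mem_image, mem_Ioi]
  constructor
  · rintro ⟨t, ht, rfl⟩
    exact rpow_pos_of_pos ht r
  · intro hs
    exact ⟨s ^ r⁻¹, rpow_pos_of_pos hs _, rpow_inv_rpow hs.le hr⟩

lemma log_div_add_mul_exp_sub_one {c : ℝ} (hc : c ≠ 0) (θ : ℝ) :
    log (c / (c + c * (exp θ - 1))) = -θ := by
  rw [show c + c * (exp θ - 1) = c * exp θ by ring, div_mul_cancel_left₀ hc, ← exp_neg, log_exp]

theorem stmt6 (ν lam x : ℝ) (hν : ν ∈ Set.Ioo (0:ℝ) 1) (hlam : 0 < lam) (hx : 0 < x) :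
    x * sSup ((fun η : ℝ => η / x - Real.log (lam / (lam + (-η) ^ ν))) '' Set.Iio 0) =
      sSup ((fun θ : ℝ => θ * x - (lam * (Real.exp θ - 1)) ^ (1 / ν)) '' Set.Ioi 0) := by
  set η : ℝ → ℝ := fun θ => -(lam * (exp θ - 1)) ^ (1 / ν)
  have hη : η '' Ioi 0 = Iio 0 := by
    rw [show η = Neg.neg ∘ (fun t : ℝ => t ^ (1 / ν)) ∘ (fun θ => lam * (exp θ - 1)) from rfl,
      image_comp, image_comp, image_mul_exp_sub_one_Ioi hlam,
      image_rpow_Ioi (one_div_ne_zero hν.1.ne'), image_neg_Ioi, neg_zero]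
  have hterm : ∀ θ ∈ Ioi (0 : ℝ),
      x * (η θ / x - log (lam / (lam + (-η θ) ^ ν))) = θ * x - (lam * (exp θ - 1)) ^ (1 / ν) := by
    intro θ hθ
    have hbase : 0 ≤ lam * (exp θ - 1) := (mul_pos hlam (sub_pos.2 (one_lt_exp_iff.2 hθ))).le
    rw [neg_neg, one_div, rpow_inv_rpow hbase hν.1.ne', log_div_add_mul_exp_sub_one hlam.ne']
    field_simp
    ring
  rw [← smul_eq_mul, ← Real.sSup_smul_of_nonneg hx.le, ← hη, ← image_smul, image_image, image_image]
  exact congrArg sSup (image_congr hterm)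
end

section
/- Let E_ν(x) = Σ_{k≥0} x^k/Γ(νk+1) be the Mittag-Leffler function with ν ∈ (0,1). If c > 0, then lim_{t→∞} (1/t) log E_ν(c t^ν) = c^{1/ν}. -/
/-!
Put `x = z ^ ν`. Each term `z ^ (ν k) / Γ(ν k + 1)` is at most `2 z · z ^ n / n!` with `n = ⌊ν k⌋`,
and `k ↦ ⌊ν k⌋` is at most `⌈1/ν⌉`-to-one, so `E_ν(z ^ ν) ≤ 2 ⌈1/ν⌉ z e ^ z`. Conversely, by
Stirling's upper bound for `n!`, the single term with `ν k ∈ [z, z + ν]` is at least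
`e ^ (z - O(log z))`. Hence `log E_ν(z ^ ν) = z + O(log z)`, and `z = c ^ (1/ν) t` gives the limit.
-/

open Real Filter Topology
open scoped Nat

theorem mul_log_sub_self_sub_le {y z : ℝ} (hz : 0 < z) (hzy : z ≤ y) :
    y * log y - y - (z * log z - z) ≤ (y - z) * log y := by
  have hy : 0 < y := hz.trans_le hzy
  have h := mul_le_mul_of_nonneg_left (log_le_sub_one_of_pos (div_pos hy hz)) hz.le
  have hz' : z * (y / z - 1) = y - z := by field_simp
  rw [log_div hy.ne' hz.ne', hz'] at h
  linarith

theorem log_factorial_le {n : ℕ} (hn : n ≠ 0) : log n ! ≤ n * log n - n + log n / 2 + 1 := by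
  have hseq : Stirling.stirlingSeq n ≤ exp 1 / √2 := by
    obtain ⟨m, rfl⟩ := Nat.exists_eq_succ_of_ne_zero hn
    simpa using Stirling.stirlingSeq'_antitone (Nat.zero_le m)
  have hn0 : (0 : ℝ) < n := by positivity
  have hfac : (n ! : ℝ) ≤ exp 1 * √n * (n / exp 1) ^ n := by
    have hden : 0 < √(2 * n : ℝ) * (n / exp 1) ^ n := by positivity
    rw [Stirling.stirlingSeq, div_le_iff₀ hden] at hseq
    calc (n ! : ℝ) ≤ exp 1 / √2 * (√(2 * n : ℝ) * (n / exp 1) ^ n) := hseq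
      _ = exp 1 * √n * (n / exp 1) ^ n := by
        rw [Real.sqrt_mul (by norm_num)]; field_simp
  calc log n ! ≤ log (exp 1 * √n * (n / exp 1) ^ n) := log_le_log (by positivity) hfac
    _ = n * log n - n + log n / 2 + 1 := by
      rw [log_mul (by positivity) (by positivity), log_mul (by positivity) (by positivity),
        log_exp, log_sqrt hn0.le, log_pow, log_div hn0.ne' (exp_pos 1).ne', log_exp]
      ring

theorem Gamma_add_one_le_factorial_ceil {y : ℝ} (hy : 1 ≤ y) : Gamma (y + 1) ≤ ⌈y⌉₊ ! := by
  rw [← Gamma_nat_eq_factorial]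
  exact Gamma_strictMonoOn_Ici.monotoneOn (by simp; linarith) (by simp; linarith [Nat.le_ceil y])
    (by linarith [Nat.le_ceil y])

theorem log_Gamma_add_one_le {y : ℝ} (hy : 1 ≤ y) :
    log (Gamma (y + 1)) ≤ y * log y - y + 2 * log (y + 1) + 1 := by
  set m := ⌈y⌉₊
  have hym : y ≤ m := Nat.le_ceil y
  have hmy : (m : ℝ) ≤ y + 1 := (Nat.ceil_lt_add_one (by linarith)).le
  have hm : m ≠ 0 := by positivity
  have hlogm : log m ≤ log (y + 1) := log_le_log (by linarith) hmy
  have hlogm0 : 0 ≤ log m := log_nonneg (by linarith)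
  have hincr := mul_log_sub_self_sub_le (by linarith) hym
  calc log (Gamma (y + 1)) ≤ log m ! :=
        log_le_log (Gamma_pos_of_pos (by linarith)) (Gamma_add_one_le_factorial_ceil hy)
    _ ≤ m * log m - m + log m / 2 + 1 := log_factorial_le hm
    _ ≤ y * log y - y + 2 * log (y + 1) + 1 := by nlinarith

theorem sub_le_log_rpow_div_Gamma {y z : ℝ} (hz : 1 ≤ z) (hzy : z ≤ y) :
    z - (y - z) * log y - 2 * log (y + 1) - 1 ≤ log (z ^ y / Gamma (y + 1)) := by
  have hz0 : 0 < z := by linarith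
  rw [log_div (by positivity) (Gamma_pos_of_pos (by linarith)).ne', log_rpow hz0]
  have hincr := mul_log_sub_self_sub_le hz0 hzy
  have hGamma := log_Gamma_add_one_le (hz.trans hzy)
  have hlog : z * log z ≤ y * log z := mul_le_mul_of_nonneg_right hzy (log_nonneg hz)
  linarith

theorem factorial_floor_le_two_mul_Gamma_add_one {y : ℝ} (hy : 0 ≤ y) :
    (⌊y⌋₊ ! : ℝ) ≤ 2 * Gamma (y + 1) := by
  rcases lt_or_ge y 1 with hy1 | hy1
  · -- `Γ(y + 1) = Γ(y + 2) / (y + 1) ≥ Γ(2) / 2`, as `Γ` increases on `[2, ∞)`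
    have hGamma2 : Gamma 2 ≤ Gamma (y + 1 + 1) :=
      Gamma_strictMonoOn_Ici.monotoneOn (by simp) (by simp; linarith) (by linarith)
    rw [Gamma_two, Gamma_add_one (by linarith)] at hGamma2
    rw [Nat.floor_eq_zero.mpr hy1, Nat.factorial_zero, Nat.cast_one]
    nlinarith [Gamma_pos_of_pos (by linarith : 0 < y + 1)]
  · have hfloor : (1 : ℝ) ≤ ⌊y⌋₊ := by exact_mod_cast (Nat.one_le_floor_iff y).mpr hy1
    have h := Gamma_strictMonoOn_Ici.monotoneOn (a := (⌊y⌋₊ : ℝ) + 1) (b := y + 1)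
      (by simp; linarith) (by simp; linarith) (by linarith [Nat.floor_le hy])
    rw [Gamma_nat_eq_factorial] at h
    linarith [Gamma_pos_of_pos (by linarith : 0 < y + 1)]

theorem rpow_div_Gamma_add_one_le {y z : ℝ} (hy : 0 ≤ y) (hz : 1 ≤ z) :
    z ^ y / Gamma (y + 1) ≤ 2 * z * (z ^ ⌊y⌋₊ / ⌊y⌋₊ !) := by
  have hnum : z ^ y ≤ z * z ^ ⌊y⌋₊ :=
    calc z ^ y ≤ z ^ ((⌊y⌋₊ + 1 : ℕ) : ℝ) :=
          rpow_le_rpow_of_exponent_le hz (by push_cast; exact (Nat.lt_floor_add_one y).le)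
      _ = z * z ^ ⌊y⌋₊ := by rw [rpow_natCast, pow_succ']
  calc z ^ y / Gamma (y + 1) ≤ z * z ^ ⌊y⌋₊ / (⌊y⌋₊ ! / 2) :=
        div_le_div₀ (by positivity) hnum (by positivity)
          (by linarith [factorial_floor_le_two_mul_Gamma_add_one hy])
    _ = 2 * z * (z ^ ⌊y⌋₊ / ⌊y⌋₊ !) := by field_simp

theorem card_filter_floor_mul_eq_le {ν : ℝ} (hν : 0 < ν) (s : Finset ℕ) (n : ℕ) :
    (s.filter fun k : ℕ => ⌊ν * k⌋₊ = n).card ≤ ⌈1 / ν⌉₊ := by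
  set k₀ := ⌈n / ν⌉₊
  refine (Finset.card_le_card (t := Finset.Ico k₀ (k₀ + ⌈1 / ν⌉₊)) fun k hk => ?_).trans (by simp)
  rw [Finset.mem_filter] at hk
  have hlo : (n : ℝ) ≤ ν * k := hk.2 ▸ Nat.floor_le (by positivity)
  have hhi : ν * k < n + 1 := hk.2 ▸ Nat.lt_floor_add_one _
  have hk₀ : (n : ℝ) / ν ≤ k₀ := Nat.le_ceil _
  have hM : 1 / ν ≤ ⌈1 / ν⌉₊ := Nat.le_ceil _
  rw [Finset.mem_Ico, Nat.ceil_le, div_le_iff₀ hν]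
  refine ⟨by linarith, ?_⟩
  have hk : (k : ℝ) < n / ν + 1 / ν := by
    rw [← add_div, lt_div_iff₀ hν]; linarith
  exact_mod_cast (show (k : ℝ) < k₀ + ⌈1 / ν⌉₊ by linarith)

theorem sum_pow_floor_mul_div_factorial_le {ν z : ℝ} (hν : 0 < ν) (hz : 0 ≤ z) (s : Finset ℕ) :
    ∑ k ∈ s, z ^ ⌊ν * k⌋₊ / (⌊ν * k⌋₊ ! : ℝ) ≤ ⌈1 / ν⌉₊ * exp z := by
  have hexp : HasSum (fun n : ℕ => z ^ n / n !) (exp z) := by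
    rw [exp_eq_exp_ℝ]; exact NormedSpace.expSeries_div_hasSum_exp z
  rw [Finset.sum_comp (fun n : ℕ => z ^ n / n !) fun k : ℕ => ⌊ν * k⌋₊]
  calc ∑ n ∈ s.image fun k : ℕ => ⌊ν * k⌋₊,
        (s.filter fun k : ℕ => ⌊ν * k⌋₊ = n).card • (z ^ n / n !)
      ≤ ∑ n ∈ s.image fun k : ℕ => ⌊ν * k⌋₊, (⌈1 / ν⌉₊ : ℝ) * (z ^ n / n !) := by
        refine Finset.sum_le_sum fun n _ => ?_
        rw [nsmul_eq_mul]
        gcongr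
        exact_mod_cast card_filter_floor_mul_eq_le hν s n
    _ ≤ ⌈1 / ν⌉₊ * exp z := sum_le_hasSum _ (fun n _ => by positivity) (hexp.mul_left _)

theorem tendsto_log_mul_add_div_atTop {a : ℝ} (ha : 0 < a) (b : ℝ) :
    Tendsto (fun z => log (a * z + b) / z) atTop (𝓝 0) := by
  have hlin : Tendsto (fun z => a * z + b) atTop atTop :=
    tendsto_atTop_add_const_right _ b (tendsto_id.const_mul_atTop ha)
  have hslope : Tendsto (fun z => a + b / z) atTop (𝓝 a) := by
    simpa using tendsto_const_nhds.add ((tendsto_const_nhds (x := b)).div_atTop tendsto_id)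
  have h := (isLittleO_log_id_atTop.tendsto_div_nhds_zero.comp hlin).mul hslope
  rw [zero_mul] at h
  refine h.congr' ?_
  filter_upwards [eventually_gt_atTop 0, hlin.eventually (eventually_gt_atTop 0)] with z hz hlinz
  simp only [Function.comp_apply, id]
  field_simp

noncomputable def mittagLeffler (ν x : ℝ) : ℝ := ∑' k : ℕ, x ^ k / Gamma (ν * k + 1)

section MittagLeffler

variable {ν z : ℝ}

theorem mittagLeffler_rpow (hz : 0 ≤ z) :
    mittagLeffler ν (z ^ ν) = ∑' k : ℕ, z ^ (ν * k) / Gamma (ν * k + 1) := by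
  simp_rw [mittagLeffler, rpow_mul_natCast hz]

theorem sum_range_rpow_mul_div_Gamma_le (hν : 0 < ν) (hz : 1 ≤ z) (K : ℕ) :
    ∑ k ∈ Finset.range K, z ^ (ν * k) / Gamma (ν * k + 1) ≤ 2 * z * (⌈1 / ν⌉₊ * exp z) :=
  calc ∑ k ∈ Finset.range K, z ^ (ν * k) / Gamma (ν * k + 1)
      ≤ ∑ k ∈ Finset.range K, 2 * z * (z ^ ⌊ν * k⌋₊ / ⌊ν * k⌋₊ !) :=
        Finset.sum_le_sum fun k _ => rpow_div_Gamma_add_one_le (by positivity) hz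
    _ = 2 * z * ∑ k ∈ Finset.range K, z ^ ⌊ν * k⌋₊ / ⌊ν * k⌋₊ ! := (Finset.mul_sum ..).symm
    _ ≤ 2 * z * (⌈1 / ν⌉₊ * exp z) := by
      gcongr; exact sum_pow_floor_mul_div_factorial_le hν (by linarith) _

theorem summable_rpow_mul_div_Gamma (hν : 0 < ν) (hz : 1 ≤ z) :
    Summable fun k : ℕ => z ^ (ν * k) / Gamma (ν * k + 1) :=
  summable_of_sum_range_le (fun k => by positivity) (sum_range_rpow_mul_div_Gamma_le hν hz)

theorem mittagLeffler_rpow_le (hν : 0 < ν) (hz : 1 ≤ z) :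
    mittagLeffler ν (z ^ ν) ≤ 2 * z * (⌈1 / ν⌉₊ * exp z) := by
  rw [mittagLeffler_rpow (by linarith)]
  exact tsum_le_of_sum_range_le (fun k => by positivity) (sum_range_rpow_mul_div_Gamma_le hν hz)

theorem rpow_mul_div_Gamma_le_mittagLeffler (hν : 0 < ν) (hz : 1 ≤ z) (k : ℕ) :
    z ^ (ν * k) / Gamma (ν * k + 1) ≤ mittagLeffler ν (z ^ ν) := by
  rw [mittagLeffler_rpow (by linarith)]
  exact (summable_rpow_mul_div_Gamma hν hz).le_tsum k fun j _ => by positivity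

theorem log_mittagLeffler_rpow_le (hν : 0 < ν) (hz : 1 ≤ z) :
    log (mittagLeffler ν (z ^ ν)) ≤ z + log (2 * ⌈1 / ν⌉₊ * z) := by
  have hpos : 0 < mittagLeffler ν (z ^ ν) :=
    lt_of_lt_of_le (by positivity) (rpow_mul_div_Gamma_le_mittagLeffler hν hz 0)
  calc log (mittagLeffler ν (z ^ ν)) ≤ log (2 * ⌈1 / ν⌉₊ * z * exp z) :=
        log_le_log hpos ((mittagLeffler_rpow_le hν hz).trans_eq (by ring))
    _ = z + log (2 * ⌈1 / ν⌉₊ * z) := by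
        rw [log_mul (by positivity) (exp_pos z).ne', log_exp, add_comm]

theorem sub_le_log_mittagLeffler_rpow (hν : 0 < ν) (hz : 1 ≤ z) :
    z - (ν + 2) * log (z + ν + 1) - 1 ≤ log (mittagLeffler ν (z ^ ν)) := by
  set k := ⌈z / ν⌉₊
  have hzk : z ≤ ν * k := by
    rw [mul_comm, ← div_le_iff₀ hν]; exact Nat.le_ceil _
  have hkz : ν * k ≤ z + ν := by
    have hk : (k : ℝ) ≤ z / ν + 1 := (Nat.ceil_lt_add_one (by positivity)).le
    calc ν * k ≤ ν * (z / ν + 1) := by gcongr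
      _ = z + ν := by field_simp
  have hlog : log (ν * k + 1) ≤ log (z + ν + 1) := log_le_log (by positivity) (by linarith)
  have hlog' : (ν * k - z) * log (ν * k) ≤ ν * log (z + ν + 1) :=
    mul_le_mul (by linarith) (log_le_log (by linarith) (by linarith)) (log_nonneg (by linarith))
      hν.le
  calc z - (ν + 2) * log (z + ν + 1) - 1
      ≤ z - (ν * k - z) * log (ν * k) - 2 * log (ν * k + 1) - 1 := by linarith
    _ ≤ log (z ^ (ν * k) / Gamma (ν * k + 1)) := sub_le_log_rpow_div_Gamma hz hzk
    _ ≤ log (mittagLeffler ν (z ^ ν)) :=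
        log_le_log (by positivity) (rpow_mul_div_Gamma_le_mittagLeffler hν hz k)

theorem tendsto_log_mittagLeffler_rpow_div_atTop (hν : 0 < ν) :
    Tendsto (fun z => log (mittagLeffler ν (z ^ ν)) / z) atTop (𝓝 1) := by
  have hlower : Tendsto (fun z => 1 - (ν + 2) * (log (z + ν + 1) / z) - z⁻¹) atTop (𝓝 1) := by
    simpa [add_assoc] using
      (((tendsto_log_mul_add_div_atTop one_pos (ν + 1)).const_mul (ν + 2)).const_sub 1).sub
        tendsto_inv_atTop_zero
  have hupper : Tendsto (fun z => 1 + log (2 * ⌈1 / ν⌉₊ * z) / z) atTop (𝓝 1) := by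
    simpa using (tendsto_log_mul_add_div_atTop (by positivity) 0).const_add 1
  refine tendsto_of_tendsto_of_tendsto_of_le_of_le' hlower hupper ?_ ?_ <;>
    filter_upwards [eventually_ge_atTop 1] with z hz
  · have h := sub_le_log_mittagLeffler_rpow hν hz
    rw [le_div_iff₀ (by linarith)]
    field_simp
    linarith
  · have h := log_mittagLeffler_rpow_le hν hz
    rw [div_le_iff₀ (by linarith)]
    field_simp
    linarith

end MittagLeffler

theorem stmt11 (ν c : ℝ) (hν : ν ∈ Set.Ioo (0:ℝ) 1) (hc : 0 < c)
    (E : ℝ → ℝ) (hE : ∀ x : ℝ, E x = ∑' k : ℕ, x ^ k / Real.Gamma (ν * k + 1)) :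
    Tendsto (fun t : ℝ => (1 / t) * Real.log (E (c * t ^ ν))) atTop
      (nhds (c ^ (1 / ν))) := by
  obtain rfl : E = mittagLeffler ν := funext hE
  set a := c ^ (1 / ν)
  have ha : 0 < a := rpow_pos_of_pos hc _
  have haν : a ^ ν = c := by
    rw [← rpow_mul hc.le, one_div, inv_mul_cancel₀ hν.1.ne', rpow_one]
  have h := ((tendsto_log_mittagLeffler_rpow_div_atTop hν.1).comp
    (tendsto_id.const_mul_atTop ha)).const_mul a
  rw [mul_one] at h
  refine h.congr' ?_
  filter_upwards [eventually_gt_atTop 0] with t ht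
  simp only [Function.comp_apply, id, mul_rpow ha.le ht.le, haν]
  field_simp
end
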